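/- arXiv:2010.10413 — 3 statements merged into one kernel-verified Lean document; each statement's English description precedes it below -/
import Mathlib

section
/- Let n ≥ 3 and let Y be any finite simple graph on n − 2 vertices. The double cone Z over Y, i.e., the join of the edgeless graph on two vertices a, b with Y (a graph on n vertices), admits proper Laplacian fractional revival between the conical vertices a and b at time 2π/n. Moreover, this fractional revival is Laplacian perfect state transfer (i.e., the coefficient of e_a is 0) if and only if n = 4. -/
open Matrix

noncomputable def lapR {V : Type*} [Fintype V] [DecidableEq V] (G : SimpleGraph V) :
    Matrix V V ℝ :=
  letI := Classical.decRel G.Adj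
  G.lapMatrix ℝ

noncomputable def lapC {V : Type*} [Fintype V] [DecidableEq V] (G : SimpleGraph V) :
    Matrix V V ℂ :=
  (lapR G).map Complex.ofReal

noncomputable def transition {V : Type*} [Fintype V] [DecidableEq V] (G : SimpleGraph V)
    (t : ℝ) : Matrix V V ℂ :=
  NormedSpace.exp ((Complex.I * (t : ℂ)) • lapC G)

/-- proper Laplacian fractional revival between distinct vertices `a, b` at time `τ`. -/
def properLaFR {V : Type*} [Fintype V] [DecidableEq V] (G : SimpleGraph V) (a b : V)
    (τ : ℝ) : Prop :=
  a ≠ b ∧ ∃ α β : ℂ, β ≠ 0 ∧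
    transition G τ *ᵥ Pi.single a 1 =
      α • (Pi.single a 1 : V → ℂ) + β • (Pi.single b 1 : V → ℂ)

/-- Laplacian periodicity at vertex `a` at time `τ`. -/
def periodicAt {V : Type*} [Fintype V] [DecidableEq V] (G : SimpleGraph V) (a : V)
    (τ : ℝ) : Prop :=
  ∃ α : ℂ, transition G τ *ᵥ Pi.single a 1 = α • (Pi.single a 1 : V → ℂ)

/-- The matrix of the orthogonal projection onto the `μ`-eigenspace of the Laplacian. -/
noncomputable def eigProj {V : Type*} [Fintype V] [DecidableEq V] (G : SimpleGraph V)
    (μ : ℝ) : Matrix V V ℝ :=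
  Matrix.toEuclideanLin.symm
    ((Module.End.eigenspace (Matrix.toEuclideanLin (lapR G)) μ).subtype ∘ₗ
      (Submodule.orthogonalProjectionOnto
        (Module.End.eigenspace (Matrix.toEuclideanLin (lapR G)) μ) :
          EuclideanSpace ℝ V →L[ℝ] _).toLinearMap)

def StronglyCospectral {V : Type*} [Fintype V] [DecidableEq V] (G : SimpleGraph V)
    (a b : V) : Prop :=
  ∀ μ : ℝ, eigProj G μ *ᵥ Pi.single a 1 = eigProj G μ *ᵥ Pi.single b 1 ∨
    eigProj G μ *ᵥ Pi.single a 1 = -(eigProj G μ *ᵥ Pi.single b 1)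

def PhiPlus {V : Type*} [Fintype V] [DecidableEq V] (G : SimpleGraph V) (a b : V) :
    Set ℝ :=
  {μ | eigProj G μ *ᵥ Pi.single a 1 = eigProj G μ *ᵥ Pi.single b 1 ∧
    eigProj G μ *ᵥ Pi.single a 1 ≠ 0}

def PhiMinus {V : Type*} [Fintype V] [DecidableEq V] (G : SimpleGraph V) (a b : V) :
    Set ℝ :=
  {μ | eigProj G μ *ᵥ Pi.single a 1 = -(eigProj G μ *ᵥ Pi.single b 1) ∧
    eigProj G μ *ᵥ Pi.single a 1 ≠ 0}

def eigSupport {V : Type*} [Fintype V] [DecidableEq V] (G : SimpleGraph V) (a : V) :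
    Set ℝ :=
  {μ | eigProj G μ *ᵥ Pi.single a 1 ≠ 0}

/-- `r` is an integer multiple of the natural number `g`. -/
def intDvd (g : ℕ) (r : ℝ) : Prop := ∃ k : ℤ, r = (g : ℝ) * k

/-!
In the double cone, `e_a - e_b` is a Laplacian eigenvector for the eigenvalue `n - 2`, while
`n (e_a + e_b) - 2 𝟙` and `𝟙` are eigenvectors for `n` and `0`. At time `τ = 2π/n` the last
two phases equal `1`, so `U(τ)` fixes `e_a + e_b` and multiplies `e_a - e_b` by `ζ ^ (n - 2)`,
where `ζ = exp (2πi/n)` is a primitive `n`-th root of unity. Hence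
`U(τ) e_a = ((1 + ζ ^ (n - 2)) / 2) e_a + ((1 - ζ ^ (n - 2)) / 2) e_b`. As
`ζ ^ (n - 2) = ζ ^ (-2)`, it is never `1`, and it is `-1` exactly when `ζ ^ 2 = -1`, i.e. when
`n = 4`.
-/

theorem Matrix.exp_mulVec_of_mulVec_eq_smul {V : Type*} [Fintype V] [DecidableEq V]
    {M : Matrix V V ℂ} {v : V → ℂ} {μ : ℂ} (h : M *ᵥ v = μ • v) :
    NormedSpace.exp M *ᵥ v = Complex.exp μ • v := by
  let _ : NormedRing (Matrix V V ℂ) := Matrix.linftyOpNormedRing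
  let _ : NormedAlgebra ℂ (Matrix V V ℂ) := Matrix.linftyOpNormedAlgebra
  have hpow (k : ℕ) : M ^ k *ᵥ v = μ ^ k • v := by
    induction k with
    | zero => simp
    | succ k ih => rw [pow_succ, ← mulVec_mulVec, h, mulVec_smul, ih, smul_smul, pow_succ']
  have hM := (NormedSpace.exp_series_hasSum_exp' (𝕂 := ℂ) M).map (mulVec.addMonoidHomLeft v)
    (continuous_id.matrix_mulVec continuous_const)
  have hμ := (NormedSpace.exp_series_hasSum_exp' (𝕂 := ℂ) μ).smul_const v
  rw [← Complex.exp_eq_exp_ℂ] at hμ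
  refine hM.unique ?_
  simpa [Function.comp_def, mulVec.addMonoidHomLeft, smul_mulVec, hpow, smul_smul] using hμ

theorem lapC_eq_lapMatrix {V : Type*} [Fintype V] [DecidableEq V] (G : SimpleGraph V)
    [DecidableRel G.Adj] : lapC G = G.lapMatrix ℂ := by
  rw [lapC, lapR, Subsingleton.elim (Classical.decRel G.Adj) ‹_›]
  ext i j
  simp only [map_apply, SimpleGraph.lapMatrix, Matrix.sub_apply, SimpleGraph.degMatrix,
    diagonal_apply, SimpleGraph.adjMatrix_apply]
  split_ifs <;> simp

theorem transition_mulVec_of_lapC_mulVec_eq_natCast_smul {V : Type*} [Fintype V]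
    [DecidableEq V] (G : SimpleGraph V) (t : ℝ) {v : V → ℂ} {m : ℕ}
    (h : lapC G *ᵥ v = (m : ℂ) • v) :
    transition G t *ᵥ v = Complex.exp (Complex.I * t) ^ m • v := by
  rw [transition, ← Complex.exp_nat_mul]
  refine exp_mulVec_of_mulVec_eq_smul ?_
  rw [smul_mulVec, h, smul_smul, mul_comm]

theorem IsPrimitiveRoot.pow_sub_two_ne_one {M : Type*} [CommMonoid M] {ζ : M} {n : ℕ}
    (hζ : IsPrimitiveRoot ζ n) (hn : 3 ≤ n) : ζ ^ (n - 2) ≠ 1 := by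
  rw [Ne, hζ.pow_eq_one_iff_dvd]
  exact fun h => absurd (Nat.le_of_dvd (by omega) h) (by omega)

theorem IsPrimitiveRoot.pow_sub_two_eq_neg_one_iff {R : Type*} [CommRing R] [NoZeroDivisors R]
    {ζ : R} {n : ℕ} (hζ : IsPrimitiveRoot ζ n) (hn : 3 ≤ n) : ζ ^ (n - 2) = -1 ↔ n = 4 := by
  have hsplit : ζ ^ (n - 2) * ζ ^ 2 = 1 := by
    rw [← pow_add, Nat.sub_add_cancel (by omega), hζ.pow_eq_one]
  have hneg_iff : ζ ^ (n - 2) = -1 ↔ ζ ^ 2 = -1 := by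
    constructor <;> intro h <;> rw [h] at hsplit <;> linear_combination -hsplit
  rw [hneg_iff]
  constructor
  · intro h
    have h4 : n ∣ 4 := hζ.dvd_of_pow_eq_one 4 <| by
      rw [show 4 = 2 * 2 from rfl, pow_mul, h]
      norm_num
    have : n ≤ 4 := Nat.le_of_dvd (by norm_num) h4
    interval_cases n <;> simp_all
  · rintro rfl
    exact (hζ.pow (by norm_num) (by norm_num : 4 = 2 * 2)).eq_neg_one_of_two_right

namespace SimpleGraph

variable {V : Type*} [Fintype V] [DecidableEq V] (G : SimpleGraph V) [DecidableRel G.Adj]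
  {a b : V}

theorem degree_add_two_of_adj_iff (hab : a ≠ b) (ha : ∀ v, G.Adj a v ↔ v ≠ a ∧ v ≠ b) :
    G.degree a + 2 = Fintype.card V := by
  have hN : G.neighborFinset a = ({a, b} : Finset V)ᶜ := by ext v; simp [ha]
  have h2 : 2 ≤ Fintype.card V := Finset.card_pair hab ▸ Finset.card_le_univ _
  rw [← card_neighborFinset_eq_degree, hN, Finset.card_compl, Finset.card_pair hab]
  omega

theorem degree_eq_of_adj_iff (hab : a ≠ b) (ha : ∀ v, G.Adj a v ↔ v ≠ a ∧ v ≠ b)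
    (hb : ∀ v, G.Adj b v ↔ v ≠ a ∧ v ≠ b) : G.degree b = G.degree a := by
  have := G.degree_add_two_of_adj_iff hab ha
  have := G.degree_add_two_of_adj_iff hab.symm fun v => (hb v).trans and_comm
  omega

theorem lapMatrix_mulVec_single_of_adj_iff {R : Type*} [NonAssocRing R] (hab : a ≠ b)
    (ha : ∀ v, G.Adj a v ↔ v ≠ a ∧ v ≠ b) :
    G.lapMatrix R *ᵥ Pi.single a 1 =
      (G.degree a : R) • Pi.single a 1 + (Pi.single a 1 + Pi.single b 1 - fun _ => 1) := by
  ext i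
  simp only [lapMatrix_mulVec_apply, Finset.sum_pi_single', mem_neighborFinset, G.adj_comm i, ha]
  rcases eq_or_ne i a with rfl | hia
  · simp [hab]
  rcases eq_or_ne i b with rfl | hib
  · simp [hia]
  · simp [hia, hib]

theorem lapMatrix_mulVec_single_sub_single_of_adj_iff {R : Type*} [CommRing R] (hab : a ≠ b)
    (ha : ∀ v, G.Adj a v ↔ v ≠ a ∧ v ≠ b) (hb : ∀ v, G.Adj b v ↔ v ≠ a ∧ v ≠ b) :
    G.lapMatrix R *ᵥ (Pi.single a 1 - Pi.single b 1) =
      (G.degree a : R) • (Pi.single a 1 - Pi.single b 1) := by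
  have hb' : ∀ v, G.Adj b v ↔ v ≠ b ∧ v ≠ a := fun v => (hb v).trans and_comm
  rw [mulVec_sub, G.lapMatrix_mulVec_single_of_adj_iff hab ha,
    G.lapMatrix_mulVec_single_of_adj_iff hab.symm hb', G.degree_eq_of_adj_iff hab ha hb]
  module

theorem lapMatrix_mulVec_card_smul_single_add_single_sub_two_of_adj_iff {R : Type*} [CommRing R]
    (hab : a ≠ b) (ha : ∀ v, G.Adj a v ↔ v ≠ a ∧ v ≠ b) (hb : ∀ v, G.Adj b v ↔ v ≠ a ∧ v ≠ b) :
    G.lapMatrix R *ᵥ ((Fintype.card V : R) • (Pi.single a 1 + Pi.single b 1) - 2 • fun _ => 1) =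
      (Fintype.card V : R) • ((Fintype.card V : R) • (Pi.single a 1 + Pi.single b 1) -
        2 • fun _ => 1) := by
  have hb' : ∀ v, G.Adj b v ↔ v ≠ b ∧ v ≠ a := fun v => (hb v).trans and_comm
  rw [mulVec_sub, mulVec_smul, mulVec_smul, mulVec_add, lapMatrix_mulVec_const_eq_zero,
    G.lapMatrix_mulVec_single_of_adj_iff hab ha, G.lapMatrix_mulVec_single_of_adj_iff hab.symm hb',
    G.degree_eq_of_adj_iff hab ha hb, ← G.degree_add_two_of_adj_iff hab ha]
  push_cast
  module

end SimpleGraph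

open SimpleGraph in
theorem transition_mulVec_single_of_adj_iff {V : Type*} [Fintype V] [DecidableEq V]
    (G : SimpleGraph V) [DecidableRel G.Adj] {a b : V} (hab : a ≠ b)
    (ha : ∀ v, G.Adj a v ↔ v ≠ a ∧ v ≠ b) (hb : ∀ v, G.Adj b v ↔ v ≠ a ∧ v ≠ b) {t : ℝ}
    (ht : Complex.exp (Complex.I * t) ^ Fintype.card V = 1) :
    transition G t *ᵥ Pi.single a 1 =
      ((1 + Complex.exp (Complex.I * t) ^ G.degree a) / 2) • (Pi.single a 1 : V → ℂ) +
        ((1 - Complex.exp (Complex.I * t) ^ G.degree a) / 2) • (Pi.single b 1 : V → ℂ) := by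
  set w := Complex.exp (Complex.I * t)
  set U := transition G t
  set c : ℂ := (Fintype.card V : ℂ)
  set ea : V → ℂ := Pi.single a 1
  set eb : V → ℂ := Pi.single b 1
  have hodd : U *ᵥ (ea - eb) = w ^ G.degree a • (ea - eb) :=
    transition_mulVec_of_lapC_mulVec_eq_natCast_smul G t <| by
      rw [lapC_eq_lapMatrix]
      exact G.lapMatrix_mulVec_single_sub_single_of_adj_iff hab ha hb
  have heven : U *ᵥ (c • (ea + eb) - 2 • fun _ => 1) = c • (ea + eb) - 2 • fun _ => 1 := by
    rw [transition_mulVec_of_lapC_mulVec_eq_natCast_smul G t, ht, one_smul]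
    rw [lapC_eq_lapMatrix]
    exact G.lapMatrix_mulVec_card_smul_single_add_single_sub_two_of_adj_iff hab ha hb
  have hconst : U *ᵥ (fun _ => 1) = fun _ => 1 := by
    simpa using transition_mulVec_of_lapC_mulVec_eq_natCast_smul G t (m := 0)
      (by rw [lapC_eq_lapMatrix, lapMatrix_mulVec_const_eq_zero, Nat.cast_zero, zero_smul])
  have hsum : U *ᵥ (ea + eb) = ea + eb := by
    have hc : c ≠ 0 := Nat.cast_ne_zero.mpr (Fintype.card_pos_iff.mpr ⟨a⟩).ne'
    apply smul_right_injective _ hc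
    rw [mulVec_sub, mulVec_smul, mulVec_smul, hconst] at heven
    dsimp only
    linear_combination (norm := module) heven
  calc U *ᵥ ea = (2 : ℂ)⁻¹ • (U *ᵥ (ea - eb) + U *ᵥ (ea + eb)) := by
        rw [← mulVec_add, ← mulVec_smul]
        congr 1
        module
    _ = _ := by
        rw [hodd, hsum]
        module

/-- Any double cone on `n ≥ 3` vertices admits proper Laplacian
fractional revival between its conical vertices at time `2π/n`, and it is
perfect state transfer iff `n = 4`. -/
theorem doubleCone_properLaFR {V : Type*} [Fintype V] [DecidableEq V]
    (Z : SimpleGraph V) (n : ℕ) (hn : 3 ≤ n) (hcard : Fintype.card V = n)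
    (a b : V) (hab : a ≠ b) (hnadj : ¬ Z.Adj a b)
    (hcone : ∀ v : V, v ≠ a → v ≠ b → Z.Adj a v ∧ Z.Adj b v) :
    ∃ α β : ℂ, β ≠ 0 ∧
      transition Z (2 * Real.pi / n) *ᵥ Pi.single a 1 =
        α • (Pi.single a 1 : V → ℂ) + β • (Pi.single b 1 : V → ℂ) ∧
      (α = 0 ↔ n = 4) := by
  classical
  have ha (v : V) : Z.Adj a v ↔ v ≠ a ∧ v ≠ b :=
    ⟨fun h => ⟨(Z.ne_of_adj h).symm, fun hvb => hnadj (hvb ▸ h)⟩, fun h => (hcone v h.1 h.2).1⟩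
  have hb (v : V) : Z.Adj b v ↔ v ≠ a ∧ v ≠ b :=
    ⟨fun h => ⟨fun hva => hnadj (hva ▸ h).symm, (Z.ne_of_adj h).symm⟩,
      fun h => (hcone v h.1 h.2).2⟩
  have hζ : IsPrimitiveRoot (Complex.exp (Complex.I * ↑(2 * Real.pi / n))) n := by
    convert Complex.isPrimitiveRoot_exp n (by omega) using 2
    push_cast
    ring
  have hdeg : Z.degree a = n - 2 := by
    have := Z.degree_add_two_of_adj_iff hab ha
    omega
  have hU := transition_mulVec_single_of_adj_iff Z hab ha hb (t := 2 * Real.pi / n)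
    (by rw [hcard]; exact hζ.pow_eq_one)
  rw [hdeg] at hU
  refine ⟨_, _, ?_, hU, ?_⟩
  · rw [Ne, div_eq_zero_iff, sub_eq_zero]
    simpa [eq_comm] using hζ.pow_sub_two_ne_one hn
  · rw [div_eq_zero_iff, ← hζ.pow_sub_two_eq_neg_one_iff hn, add_eq_zero_iff_eq_neg']
    norm_num
end

section
/- Let X be a connected finite simple graph with Laplacian strongly cospectral vertices a and b, and suppose |Φ⁻| = k. Then every vertex at graph distance exactly k from a is at graph distance at most k from b. In particular, the distance between a and b is at most 2k. -/
open Matrix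

/-!
Let `q = ∏_{μ ∈ Φ⁻} (x - μ)`, monic of degree `k`. Strong cospectrality puts `e_a - e_b` in the
sum of the `Φ⁻`-eigenspaces, so `q(L) e_a = q(L) e_b`. Because `L` vanishes off the diagonal and
the edges, `(L^i)_{vw} = 0` for `i < dist(v, w)`, while `(-1)^d (L^d)_{vw} > 0` for
`d = dist(v, w)` (all contributing walks are geodesics, each picking up the sign `(-1)^d`).
So if `dist(a, v) = k < dist(b, v)`, the `v`-entries of `q(L) e_a` and `q(L) e_b` are
`(L^k)_{va} ≠ 0` and `0`. A vertex at distance `k` from `a` on a geodesic to `b` then gives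
`dist(a, b) ≤ 2k`.
-/

lemma Set.Finite.exists_monic_natDegree_eq_ncard {R : Type*} [CommRing R] [Nontrivial R]
    {s : Set R} (hs : s.Finite) :
    ∃ q : Polynomial R, q.Monic ∧ q.natDegree = s.ncard ∧ ∀ x ∈ s, q.eval x = 0 := by
  classical
  refine ⟨∏ x ∈ hs.toFinset, (Polynomial.X - Polynomial.C x),
    Polynomial.monic_prod_X_sub_C _ _, ?_, fun x hx => ?_⟩
  · rw [Polynomial.natDegree_finsetProd_X_sub_C_eq_card, Set.ncard_eq_toFinset_card _ hs]
  · rw [Polynomial.eval_prod]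
    exact Finset.prod_eq_zero (hs.mem_toFinset.2 hx) (by simp)

namespace Matrix

variable {n : Type*} [Fintype n] [DecidableEq n] (A : Matrix n n ℝ) (μ : ℝ)

/-- `eigProj G μ` is definitionally `(lapR G).eigenprojection μ`. -/
noncomputable def eigenprojection : Matrix n n ℝ :=
  toEuclideanLin.symm (Module.End.eigenspace (toEuclideanLin A) μ).starProjection.toLinearMap

lemma toLp_eigenprojection_mulVec (u : n → ℝ) :
    WithLp.toLp 2 (A.eigenprojection μ *ᵥ u) =
      (Module.End.eigenspace (toEuclideanLin A) μ).starProjection (WithLp.toLp 2 u) := by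
  change toEuclideanLin (A.eigenprojection μ) (WithLp.toLp 2 u) = _
  rw [eigenprojection, LinearEquiv.apply_symm_apply]
  rfl

lemma eigenprojection_mulVec_mem (u : n → ℝ) :
    WithLp.toLp 2 (A.eigenprojection μ *ᵥ u) ∈ Module.End.eigenspace (toEuclideanLin A) μ := by
  rw [toLp_eigenprojection_mulVec]
  exact Submodule.starProjection_apply_mem _ _

lemma hasEigenvalue_of_eigenprojection_mulVec_ne_zero {u : n → ℝ}
    (h : A.eigenprojection μ *ᵥ u ≠ 0) : Module.End.HasEigenvalue (toEuclideanLin A) μ :=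
  Module.End.hasEigenvalue_of_hasEigenvector
    ⟨eigenprojection_mulVec_mem A μ u, by simpa using h⟩

lemma eigenprojection_isHermitian : (A.eigenprojection μ).IsHermitian := by
  rw [← isSymmetric_toEuclideanLin_iff, eigenprojection, LinearEquiv.apply_symm_apply]
  exact Submodule.starProjection_isSymmetric _

lemma mul_eigenprojection : A * A.eigenprojection μ = μ • A.eigenprojection μ := by
  ext v w
  have h : A *ᵥ (A.eigenprojection μ *ᵥ Pi.single w 1) =
      μ • (A.eigenprojection μ *ᵥ Pi.single w 1) :=
    congrArg WithLp.ofLp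
      ((Module.End.mem_eigenspace_iff).mp (eigenprojection_mulVec_mem A μ (Pi.single w 1)))
  rw [mulVec_mulVec, mulVec_single_one, mulVec_single_one] at h
  simpa using congrFun h v

variable {A}

lemma IsHermitian.eigenprojection_mul (hA : A.IsHermitian) :
    A.eigenprojection μ * A = μ • A.eigenprojection μ := by
  have hP := (isHermitian_iff_isSymm.mp (eigenprojection_isHermitian A μ)).eq
  calc A.eigenprojection μ * A = (A.eigenprojection μ)ᵀ * Aᵀ := by
        rw [hP, (isHermitian_iff_isSymm.mp hA).eq]
    _ = (A * A.eigenprojection μ)ᵀ := (transpose_mul _ _).symm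
    _ = μ • A.eigenprojection μ := by rw [mul_eigenprojection, transpose_smul, hP]

lemma IsHermitian.eigenprojection_mul_pow (hA : A.IsHermitian) (k : ℕ) :
    A.eigenprojection μ * A ^ k = μ ^ k • A.eigenprojection μ := by
  induction k with
  | zero => simp
  | succ k ih =>
    rw [pow_succ, ← Matrix.mul_assoc, ih, smul_mul, hA.eigenprojection_mul, smul_smul, pow_succ]

lemma IsHermitian.eigenprojection_mul_aeval (hA : A.IsHermitian) (q : Polynomial ℝ) :
    A.eigenprojection μ * Polynomial.aeval A q = q.eval μ • A.eigenprojection μ := by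
  rw [Polynomial.aeval_eq_sum_range, Polynomial.eval_eq_sum_range, Finset.mul_sum, Finset.sum_smul]
  refine Finset.sum_congr rfl fun i _ => ?_
  rw [Matrix.mul_smul, hA.eigenprojection_mul_pow, smul_smul]

lemma IsHermitian.eq_zero_of_forall_eigenprojection_mulVec_eq_zero (hA : A.IsHermitian)
    {u : n → ℝ} (h : ∀ μ, A.eigenprojection μ *ᵥ u = 0) : u = 0 := by
  have hmem : WithLp.toLp 2 u ∈ (⨆ μ, Module.End.eigenspace (toEuclideanLin A) μ)ᗮ := by
    rw [← Submodule.iInf_orthogonal, Submodule.mem_iInf]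
    intro μ
    rw [← Submodule.starProjection_apply_eq_zero_iff, ← toLp_eigenprojection_mulVec, h μ]
    rfl
  rwa [(isSymmetric_toEuclideanLin_iff.mpr hA).orthogonalComplement_iSup_eigenspaces_eq_bot,
    Submodule.mem_bot, WithLp.toLp_eq_zero] at hmem

lemma IsHermitian.aeval_mulVec_eq_zero (hA : A.IsHermitian) {q : Polynomial ℝ} {u : n → ℝ}
    (h : ∀ μ, q.eval μ = 0 ∨ A.eigenprojection μ *ᵥ u = 0) : Polynomial.aeval A q *ᵥ u = 0 :=
  hA.eq_zero_of_forall_eigenprojection_mulVec_eq_zero fun μ => by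
    rw [mulVec_mulVec, hA.eigenprojection_mul_aeval, smul_mulVec]
    rcases h μ with h | h <;> simp [h]

end Matrix

namespace SimpleGraph

variable {V : Type*} {G : SimpleGraph V}

lemma dist_le_dist_add_one_of_adj {u v : V} (h : G.Adj u v) (w : V) :
    G.dist u w ≤ G.dist v w + 1 := by
  rw [dist_comm, dist_comm (u := v)]
  rcases h.symm.diff_dist_adj (u := w) with h | h | h <;> omega

lemma Reachable.exists_dist_eq {u w : V} (h : G.Reachable u w) {k : ℕ} (hk : k ≤ G.dist u w) :
    ∃ v, G.dist u v = k := by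
  obtain ⟨p, hp⟩ := h.exists_walk_length_eq_dist
  refine ⟨p.getVert k, le_antisymm ?_ ?_⟩
  · exact (dist_le (p.take k)).trans (by simp [Walk.take_length])
  · have htake := (p.take k).reachable.dist_triangle_left w
    have hdrop := dist_le (p.drop k)
    rw [Walk.drop_length] at hdrop
    omega

section

variable [Fintype V] [DecidableEq V] {M : Matrix V V ℝ}

lemma pow_apply_eq_zero_of_lt_dist (hM : ∀ v w, v ≠ w → ¬G.Adj v w → M v w = 0) {j : ℕ} :
    ∀ {v w : V}, j < G.dist v w → (M ^ j) v w = 0 := by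
  induction j with
  | zero =>
    intro v w h
    rw [pow_zero, Matrix.one_apply_ne]
    rintro rfl
    simp at h
  | succ j ih =>
    intro v w h
    rw [pow_succ', Matrix.mul_apply]
    refine Finset.sum_eq_zero fun u _ => ?_
    by_cases huv : v = u
    · rw [← huv, ih (by omega), mul_zero]
    by_cases hadj : G.Adj v u
    · rw [ih (by have := dist_le_dist_add_one_of_adj hadj w; omega), mul_zero]
    · rw [hM v u huv hadj, zero_mul]

lemma neg_one_pow_dist_mul_pow_dist_apply_pos (hM : ∀ v w, v ≠ w → ¬G.Adj v w → M v w = 0)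
    (hneg : ∀ v w, G.Adj v w → M v w < 0) {v w : V} (h : G.Reachable v w) :
    0 < (-1) ^ G.dist v w * (M ^ G.dist v w) v w := by
  generalize hj : G.dist v w = j
  induction j generalizing v with
  | zero =>
    rw [h.dist_eq_zero_iff] at hj
    simp [hj]
  | succ j ih =>
    obtain ⟨p, hp⟩ := h.exists_walk_length_eq_dist
    cases p with
    | nil => simp_all
    | cons hadj q =>
      rename_i u
      have hu : G.dist u w = j := le_antisymm
        (by have := dist_le q; simp only [Walk.length_cons] at hp; omega)
        (by have := dist_le_dist_add_one_of_adj hadj w; omega)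
      have hterm (x : V) : (-1) ^ (j + 1) * (M v x * (M ^ j) x w) =
          -M v x * ((-1) ^ j * (M ^ j) x w) := by ring
      rw [pow_succ' M, Matrix.mul_apply, Finset.mul_sum]
      simp_rw [hterm]
      refine Finset.sum_pos' (fun x _ => ?_) ⟨u, Finset.mem_univ u,
        mul_pos (neg_pos.2 (hneg v u hadj)) (ih (hadj.symm.reachable.trans h) hu)⟩
      by_cases hvx : v = x
      · rw [← hvx, pow_apply_eq_zero_of_lt_dist hM (by omega), mul_zero, mul_zero]
      by_cases hadjx : G.Adj v x
      · have hx : j ≤ G.dist x w := by have := dist_le_dist_add_one_of_adj hadjx w; omega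
        rcases hx.eq_or_lt with hx | hx
        · exact mul_nonneg (neg_nonneg.2 (hneg v x hadjx).le)
            (ih (hadjx.symm.reachable.trans h) hx.symm).le
        · rw [pow_apply_eq_zero_of_lt_dist hM hx, mul_zero, mul_zero]
      · rw [hM v x hvx hadjx, neg_zero, zero_mul]

lemma aeval_apply_eq_zero_of_natDegree_lt_dist (hM : ∀ v w, v ≠ w → ¬G.Adj v w → M v w = 0)
    {q : Polynomial ℝ} {v w : V} (hq : q.natDegree < G.dist v w) :
    Polynomial.aeval M q v w = 0 := by
  rw [Polynomial.aeval_eq_sum_range, Matrix.sum_apply]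
  refine Finset.sum_eq_zero fun i hi => ?_
  have hi : i < G.dist v w := by have := Finset.mem_range.1 hi; omega
  rw [Matrix.smul_apply, pow_apply_eq_zero_of_lt_dist hM hi, smul_zero]

lemma aeval_apply_eq_pow_apply_of_monic (hM : ∀ v w, v ≠ w → ¬G.Adj v w → M v w = 0)
    {q : Polynomial ℝ} (hq : q.Monic) {v w : V} (hdeg : q.natDegree = G.dist v w) :
    Polynomial.aeval M q v w = (M ^ q.natDegree) v w := by
  rw [Polynomial.aeval_eq_sum_range, Matrix.sum_apply, Finset.sum_range_succ, Matrix.smul_apply,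
    hq.coeff_natDegree, one_smul, add_eq_right]
  refine Finset.sum_eq_zero fun i hi => ?_
  rw [Matrix.smul_apply, pow_apply_eq_zero_of_lt_dist hM (hdeg ▸ Finset.mem_range.1 hi),
    smul_zero]

end

end SimpleGraph

section Laplacian

variable {V : Type*} [Fintype V] [DecidableEq V] (G : SimpleGraph V)

lemma lapR_isHermitian : (lapR G).IsHermitian := by
  classical
  exact G.isHermitian_lapMatrix ℝ

variable {G}

lemma lapR_apply_eq_zero_of_not_adj {v w : V} (hne : v ≠ w) (h : ¬G.Adj v w) :
    lapR G v w = 0 := by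
  classical
  simp [lapR, SimpleGraph.lapMatrix, SimpleGraph.degMatrix, hne, h]

lemma lapR_apply_of_adj {v w : V} (h : G.Adj v w) : lapR G v w = -1 := by
  classical
  simp [lapR, SimpleGraph.lapMatrix, SimpleGraph.degMatrix, h.ne, h]

end Laplacian

section StronglyCospectral

variable {V : Type*} [Fintype V] [DecidableEq V] {G : SimpleGraph V} {a b : V}

lemma finite_phiMinus (G : SimpleGraph V) (a b : V) : (PhiMinus G a b).Finite :=
  (Module.End.finite_hasEigenvalue _).subset fun μ hμ =>
    (lapR G).hasEigenvalue_of_eigenprojection_mulVec_ne_zero μ hμ.2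

lemma StronglyCospectral.eigProj_mulVec_sub_eq_zero (h : StronglyCospectral G a b) {μ : ℝ}
    (hμ : μ ∉ PhiMinus G a b) : eigProj G μ *ᵥ (Pi.single a 1 - Pi.single b 1) = 0 := by
  rw [mulVec_sub, sub_eq_zero]
  rcases h μ with h | h
  · exact h
  · have ha : eigProj G μ *ᵥ Pi.single a 1 = 0 := not_not.1 fun hne => hμ ⟨h, hne⟩
    rw [ha] at h ⊢
    exact (neg_eq_zero.1 h.symm).symm

lemma StronglyCospectral.aeval_lapR_apply_eq (h : StronglyCospectral G a b) {q : Polynomial ℝ}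
    (hq : ∀ μ ∈ PhiMinus G a b, q.eval μ = 0) (v : V) :
    Polynomial.aeval (lapR G) q v a = Polynomial.aeval (lapR G) q v b := by
  have hzero := (lapR_isHermitian G).aeval_mulVec_eq_zero (q := q)
    (u := Pi.single a 1 - Pi.single b 1) fun μ =>
      (em (μ ∈ PhiMinus G a b)).imp (hq μ) h.eigProj_mulVec_sub_eq_zero
  rw [mulVec_sub, sub_eq_zero, mulVec_single_one, mulVec_single_one] at hzero
  simpa using congrFun hzero v

lemma StronglyCospectral.dist_le_of_dist_eq_ncard (h : StronglyCospectral G a b)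
    (hconn : G.Connected) {v : V} (hv : G.dist a v = (PhiMinus G a b).ncard) :
    G.dist b v ≤ (PhiMinus G a b).ncard := by
  obtain ⟨q, hq_monic, hq_deg, hq_root⟩ :=
    (finite_phiMinus G a b).exists_monic_natDegree_eq_ncard
  have hM (x y : V) : x ≠ y → ¬G.Adj x y → lapR G x y = 0 := lapR_apply_eq_zero_of_not_adj
  have hneg (x y : V) (hxy : G.Adj x y) : lapR G x y < 0 := by
    rw [lapR_apply_of_adj hxy]; norm_num
  by_contra! hlt
  rw [SimpleGraph.dist_comm] at hv hlt
  have hcol := h.aeval_lapR_apply_eq hq_root v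
  rw [SimpleGraph.aeval_apply_eq_pow_apply_of_monic hM hq_monic (hq_deg.trans hv.symm),
    SimpleGraph.aeval_apply_eq_zero_of_natDegree_lt_dist hM (hq_deg ▸ hlt), hq_deg, ← hv] at hcol
  have hpos :=
    SimpleGraph.neg_one_pow_dist_mul_pow_dist_apply_pos hM hneg (hconn.preconnected v a)
  rw [hcol, mul_zero] at hpos
  exact hpos.false

end StronglyCospectral

/-- If `|Φ⁻| = k` for strongly cospectral `a, b`, then every
vertex at distance exactly `k` from `a` is at distance at most `k` from `b`;
in particular `dist a b ≤ 2k`. -/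
theorem phiMinus_card_dist {V : Type*} [Fintype V] [DecidableEq V]
    (X : SimpleGraph V) (hconn : X.Connected) (a b : V)
    (hsc : StronglyCospectral X a b) (k : ℕ) (hk : (PhiMinus X a b).ncard = k) :
    (∀ v : V, X.dist a v = k → X.dist b v ≤ k) ∧ X.dist a b ≤ 2 * k := by
  subst hk
  have hsphere (v : V) (hv : X.dist a v = (PhiMinus X a b).ncard) :
      X.dist b v ≤ (PhiMinus X a b).ncard :=
    hsc.dist_le_of_dist_eq_ncard hconn hv
  refine ⟨hsphere, ?_⟩
  rcases le_or_gt (X.dist a b) (PhiMinus X a b).ncard with hab | hab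
  · omega
  obtain ⟨v, hv⟩ := (hconn.preconnected a b).exists_dist_eq hab.le
  have htri : X.dist a b ≤ X.dist a v + X.dist v b := hconn.dist_triangle
  have hvb := hsphere v hv
  rw [SimpleGraph.dist_comm] at hvb
  omega
end

section
/- Let X be a finite simple graph admitting proper Laplacian fractional revival between distinct vertices a and b at time τ. Then a and b are Laplacian strongly cospectral, and the function μ ↦ e^{iτμ} is constant on Φ⁺ and constant on Φ⁻; that is, for all μ, ν both in Φ⁺, or both in Φ⁻, one has exp(iτμ) = exp(iτν). -/
/-!
Write `U = U(τ)` and `U e_a = α e_a + β e_b`. Since `F_μ L = μ F_μ`, also `F_μ U = e^{iτμ} F_μ`,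
so applying `F_μ` gives `e^{iτμ} F_μ e_a = α F_μ e_a + β F_μ e_b`. Unitarity of `U` gives
`|α|² + |β|² = 1`, and since the all-ones vector `𝟙` satisfies `𝟙ᵀ L = 0`, also `𝟙ᵀ U = 𝟙ᵀ`,
whence `α + β = 1`. If `F_μ e_a ≠ 0`, the identity forces `F_μ e_b = c F_μ e_a` with `c` real
(both vectors are real) and `e^{iτμ} = α + βc`; then `|α + βc| = 1` together with the two
relations gives `(c² - 1)|β|² = 0`, so `c = ±1`. Hence `e^{iτμ}` equals `α + β = 1` on `Φ⁺`
and `α - β` on `Φ⁻`.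
-/

open Matrix

namespace Matrix

variable {n : Type*} [Fintype n] [DecidableEq n]

open scoped Norms.Operator in
theorem mul_exp_eq_smul_of_mul_eq_smul {P A : Matrix n n ℂ} {z : ℂ} (h : P * A = z • P) :
    P * NormedSpace.exp A = Complex.exp z • P := by
  have hsc : SemiconjBy P A (algebraMap ℂ _ z) := by
    rw [SemiconjBy, h, Algebra.smul_def]
  refine hsc.exp_right.eq.trans ?_
  rw [← NormedSpace.algebraMap_exp_comm, ← Algebra.smul_def, Complex.exp_eq_exp_ℂ]

theorem vecMul_exp_eq_smul_of_vecMul_eq_smul {v : n → ℂ} {A : Matrix n n ℂ} {z : ℂ}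
    (h : v ᵥ* A = z • v) : v ᵥ* NormedSpace.exp A = Complex.exp z • v := by
  -- rows indexed by `n` make `replicateRow n v` square, i.e. an element of the Banach algebra
  have hrow : replicateRow n v * A = z • replicateRow n v := by
    rw [← replicateRow_vecMul, h, replicateRow_smul]
  funext j
  simpa [← replicateRow_vecMul] using congrFun₂ (mul_exp_eq_smul_of_mul_eq_smul hrow) j j

theorem exp_I_smul_mem_unitaryGroup {A : Matrix n n ℂ} (hA : A.IsHermitian) (t : ℝ) :
    NormedSpace.exp ((Complex.I * t) • A) ∈ unitaryGroup n ℂ := by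
  set X := (Complex.I * t) • A
  have hskew : star X = -X := by
    rw [star_smul, hA.star_eq]
    simp [X, Complex.conj_ofReal]
  rw [mem_unitaryGroup_iff', star_eq_conjTranspose, ← exp_conjTranspose,
    ← star_eq_conjTranspose, hskew, ← exp_add_of_commute _ _ (Commute.neg_left (.refl X)),
    neg_add_cancel, NormedSpace.exp_zero]

end Matrix

section Laplacian

variable {V : Type*} [Fintype V] [DecidableEq V] (G : SimpleGraph V)

theorem lapR_isSymm : (lapR G).IsSymm := by
  classical
  exact G.isSymm_lapMatrix (R := ℝ)

theorem lapC_isHermitian : (lapC G).IsHermitian := by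
  ext i j
  simp [lapC, (lapR_isSymm G).apply i j]

theorem const_vecMul_lapR_eq_zero : (fun _ ↦ 1 : V → ℝ) ᵥ* lapR G = 0 := by
  classical
  rw [← mulVec_transpose, lapR_isSymm G, lapR]
  convert G.lapMatrix_mulVec_const_eq_zero (R := ℝ)

theorem toEuclideanLin_eigProj (μ : ℝ) :
    toEuclideanLin (eigProj G μ) =
      (Module.End.eigenspace (toEuclideanLin (lapR G)) μ).starProjection.toLinearMap := by
  rw [eigProj, LinearEquiv.apply_symm_apply]
  rfl

theorem eigProj_isSymm (μ : ℝ) : (eigProj G μ).IsSymm := by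
  rw [← isHermitian_iff_isSymm, ← isSymmetric_toEuclideanLin_iff, toEuclideanLin_eigProj]
  exact Submodule.starProjection_isSymmetric _

theorem lapR_mul_eigProj (μ : ℝ) : lapR G * eigProj G μ = μ • eigProj G μ := by
  apply toEuclideanLin.injective
  ext1 x
  rw [toLpLin_mul_same, LinearMap.comp_apply, map_smul, LinearMap.smul_apply,
    toEuclideanLin_eigProj]
  exact Module.End.mem_eigenspace_iff.mp (Submodule.starProjection_apply_mem _ x)

theorem eigProj_mul_lapR (μ : ℝ) : eigProj G μ * lapR G = μ • eigProj G μ := by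
  simpa [(eigProj_isSymm G μ).eq, (lapR_isSymm G).eq] using
    congrArg transpose (lapR_mul_eigProj G μ)

theorem eigProj_map_mul_transition (μ τ : ℝ) :
    (eigProj G μ).map Complex.ofReal * transition G τ =
      Complex.exp (Complex.I * τ * μ) • (eigProj G μ).map Complex.ofReal := by
  have hmap : (eigProj G μ).map Complex.ofReal * lapC G =
      (μ : ℂ) • (eigProj G μ).map Complex.ofReal := by
    ext i j
    have h := congrFun₂ (eigProj_mul_lapR G μ) i j
    simp only [mul_apply, Matrix.smul_apply, smul_eq_mul] at h
    simp only [lapC, mul_apply, map_apply, Matrix.smul_apply, smul_eq_mul]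
    exact_mod_cast h
  apply mul_exp_eq_smul_of_mul_eq_smul
  rw [Matrix.mul_smul, hmap, smul_smul]

theorem const_vecMul_transition (τ : ℝ) :
    (fun _ ↦ 1 : V → ℂ) ᵥ* transition G τ = fun _ ↦ 1 := by
  have hC : (fun _ ↦ 1 : V → ℂ) ᵥ* lapC G = 0 := by
    ext j
    have h := congrFun (const_vecMul_lapR_eq_zero G) j
    simp only [vecMul, dotProduct, one_mul, Pi.zero_apply] at h
    simp [vecMul, dotProduct, lapC, ← Complex.ofReal_sum, h]
  simpa [transition] using vecMul_exp_eq_smul_of_vecMul_eq_smul (z := 0)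
    (A := (Complex.I * τ) • lapC G) (by rw [vecMul_smul, hC, smul_zero, zero_smul])

theorem transition_mem_unitaryGroup (τ : ℝ) : transition G τ ∈ unitaryGroup V ℂ :=
  exp_I_smul_mem_unitaryGroup (lapC_isHermitian G) τ

end Laplacian

section RevivalAmplitudes

variable {ι : Type*} {α β e : ℂ} {x y : ι → ℝ}

theorem eq_one_or_eq_neg_one_of_norm_add_mul_eq_one (hβ : β ≠ 0) (hsum : α + β = 1)
    (hnorm : ‖α‖ ^ 2 + ‖β‖ ^ 2 = 1) {c : ℝ} (hc : ‖α + β * c‖ = 1) : c = 1 ∨ c = -1 := by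
  obtain rfl : α = 1 - β := by linear_combination hsum
  have hc' : Complex.normSq (1 - β + β * c) = 1 := by rw [← Complex.sq_norm, hc, one_pow]
  rw [Complex.sq_norm, Complex.sq_norm] at hnorm
  have key : (c ^ 2 - 1) * Complex.normSq β = 0 := by
    simp only [Complex.normSq_apply, Complex.add_re, Complex.add_im, Complex.sub_re,
      Complex.sub_im, Complex.mul_re, Complex.mul_im, Complex.one_re, Complex.one_im,
      Complex.ofReal_re, Complex.ofReal_im] at hnorm hc' ⊢
    linear_combination hc' + (c - 1) * hnorm
  simpa [sub_eq_zero, hβ] using key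

theorem exists_real_smul_of_forall_mul_eq (hβ : β ≠ 0) (hx : x ≠ 0)
    (h : ∀ i, e * x i = α * x i + β * y i) : ∃ c : ℝ, y = c • x := by
  obtain ⟨i₀, hi₀⟩ : ∃ i, x i ≠ 0 := by simpa [funext_iff] using hx
  refine ⟨y i₀ / x i₀, funext fun i ↦ ?_⟩
  have hβc : β * ((y i * x i₀ - y i₀ * x i : ℝ) : ℂ) = 0 := by
    push_cast
    linear_combination x i * h i₀ - x i₀ * h i
  have hcross : y i * x i₀ - y i₀ * x i = 0 := by
    rw [mul_eq_zero, Complex.ofReal_eq_zero] at hβc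
    exact hβc.resolve_left hβ
  simp only [Pi.smul_apply, smul_eq_mul]
  field_simp
  linarith

theorem eq_add_mul_of_forall_mul_eq (hx : x ≠ 0) (h : ∀ i, e * x i = α * x i + β * y i)
    {c : ℝ} (hy : y = c • x) : e = α + β * c := by
  obtain ⟨i, hi⟩ : ∃ i, x i ≠ 0 := by simpa [funext_iff] using hx
  have hyi : (y i : ℂ) = c * x i := by simp [hy]
  have hi' : (e - (α + β * c)) * x i = 0 := by
    linear_combination h i + β * hyi
  simpa [sub_eq_zero, hi] using hi'

theorem eq_or_eq_neg_of_forall_mul_eq (hβ : β ≠ 0) (hsum : α + β = 1)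
    (hnorm : ‖α‖ ^ 2 + ‖β‖ ^ 2 = 1) (he : ‖e‖ = 1) (h : ∀ i, e * x i = α * x i + β * y i) :
    x = y ∨ x = -y := by
  by_cases hx : x = 0
  · left
    subst hx
    ext i
    simpa [hβ, eq_comm] using h i
  obtain ⟨c, hy⟩ := exists_real_smul_of_forall_mul_eq hβ hx h
  rcases eq_one_or_eq_neg_one_of_norm_add_mul_eq_one hβ hsum hnorm
    (eq_add_mul_of_forall_mul_eq hx h hy ▸ he) with rfl | rfl
  · simp [hy]
  · simp [hy]

end RevivalAmplitudes

section ProperLaFR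

variable {V : Type*} [Fintype V] [DecidableEq V] {G : SimpleGraph V} {a b : V} {τ : ℝ}
  {α β : ℂ}

theorem add_eq_one_of_transition_mulVec_single
    (hrev : transition G τ *ᵥ Pi.single a 1 = α • Pi.single a 1 + β • Pi.single b 1) :
    α + β = 1 := by
  have h := congrArg ((fun _ ↦ 1 : V → ℂ) ⬝ᵥ ·) hrev
  rw [dotProduct_mulVec, const_vecMul_transition] at h
  simpa using h.symm

theorem norm_sq_add_norm_sq_of_transition_mulVec_single (hab : a ≠ b)
    (hrev : transition G τ *ᵥ Pi.single a 1 = α • Pi.single a 1 + β • Pi.single b 1) :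
    ‖α‖ ^ 2 + ‖β‖ ^ 2 = 1 := by
  have hU := mem_unitaryGroup_iff'.mp (transition_mem_unitaryGroup G τ)
  have h : star (transition G τ *ᵥ Pi.single a 1) ⬝ᵥ (transition G τ *ᵥ Pi.single a 1) = 1 := by
    rw [star_mulVec, dotProduct_mulVec, vecMul_vecMul, ← star_eq_conjTranspose, hU, vecMul_one]
    simp
  rw [hrev] at h
  exact_mod_cast (by simpa [hab, hab.symm, Complex.mul_conj'] using h :
    (‖α‖ : ℂ) ^ 2 + (‖β‖ : ℂ) ^ 2 = 1)

theorem exp_mul_eigProj_mulVec_single (μ : ℝ)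
    (hrev : transition G τ *ᵥ Pi.single a 1 = α • Pi.single a 1 + β • Pi.single b 1) (i : V) :
    Complex.exp (Complex.I * τ * μ) * (eigProj G μ *ᵥ Pi.single a 1) i =
      α * (eigProj G μ *ᵥ Pi.single a 1) i + β * (eigProj G μ *ᵥ Pi.single b 1) i := by
  have h := congrFun (congrArg (· *ᵥ (Pi.single a 1 : V → ℂ))
    (eigProj_map_mul_transition G μ τ)) i
  simp only [← mulVec_mulVec, hrev] at h
  simpa [mulVec_add, mulVec_smul, mulVec_single_one] using h.symm

end ProperLaFR

/-- Under proper LaFR between `a` and `b` at time `τ`, `a` and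
`b` are strongly cospectral and `μ ↦ e^{iτμ}` is constant on `Φ⁺` and on `Φ⁻`. -/
theorem properLaFR_exp_constant {V : Type*} [Fintype V] [DecidableEq V]
    (X : SimpleGraph V) (a b : V) (τ : ℝ) (h : properLaFR X a b τ) :
    StronglyCospectral X a b ∧
    ∀ μ ν : ℝ,
      ((μ ∈ PhiPlus X a b ∧ ν ∈ PhiPlus X a b) ∨
        (μ ∈ PhiMinus X a b ∧ ν ∈ PhiMinus X a b)) →
      Complex.exp (Complex.I * τ * μ) = Complex.exp (Complex.I * τ * ν) := by
  obtain ⟨hab, α, β, hβ, hrev⟩ := h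
  have hsum := add_eq_one_of_transition_mulVec_single hrev
  have hnorm := norm_sq_add_norm_sq_of_transition_mulVec_single hab hrev
  have hcol := fun μ ↦ exp_mul_eigProj_mulVec_single μ hrev
  have hexp : ∀ μ : ℝ, ‖Complex.exp (Complex.I * τ * μ)‖ = 1 := fun μ ↦ by
    simp [Complex.norm_exp]
  refine ⟨fun μ ↦ eq_or_eq_neg_of_forall_mul_eq hβ hsum hnorm (hexp μ) (hcol μ), ?_⟩
  rintro μ ν (⟨⟨hμ, hμ0⟩, hν, hν0⟩ | ⟨⟨hμ, hμ0⟩, hν, hν0⟩)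
  · rw [eq_add_mul_of_forall_mul_eq hμ0 (hcol μ) (c := 1) (by simp [hμ]),
      eq_add_mul_of_forall_mul_eq hν0 (hcol ν) (c := 1) (by simp [hν])]
  · rw [eq_add_mul_of_forall_mul_eq hμ0 (hcol μ) (c := -1) (by simp [hμ]),
      eq_add_mul_of_forall_mul_eq hν0 (hcol ν) (c := -1) (by simp [hν])]
end
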